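/- Let $R$ be a ring satisfying the ascending chain condition on right annihilators and on left annihilators. Let $I$ be a two-sided ideal of $R$ and let $L = \operatorname{lann}_R I$ be its left annihilator. Then the quotient ring $R/L$ satisfies the ascending chain condition on right annihilators and on left annihilators. -/
import Mathlib


/-- The right annihilator of a subset `X` of a ring. -/
def rAnnSet (R : Type*) [Ring R] (X : Set R) : Set R := {r | ∀ x ∈ X, x * r = 0}

/-- The left annihilator of a subset `X` of a ring. -/
def lAnnSet (R : Type*) [Ring R] (X : Set R) : Set R := {r | ∀ x ∈ X, r * x = 0}

/-- A ring satisfies the ascending chain condition on right annihilators. -/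
def ACCRightAnnihilators (R : Type*) [Ring R] : Prop :=
  ∀ f : ℕ → Set R, (∀ n, ∃ X, f n = rAnnSet R X) → Monotone f →
    ∃ N, ∀ n, N ≤ n → f n = f N

/-- A ring satisfies the ascending chain condition on left annihilators. -/
def ACCLeftAnnihilators (R : Type*) [Ring R] : Prop :=
  ∀ f : ℕ → Set R, (∀ n, ∃ X, f n = lAnnSet R X) → Monotone f →
    ∃ N, ∀ n, N ≤ n → f n = f N

/-- If `R` has ACC on right and left annihilators, `I` is a two-sided ideal and
`L = lann_R I`, then the quotient ring `R/L` (presented as the image of any surjective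
ring homomorphism with kernel `L`) has ACC on right and left annihilators. -/
theorem acc_annihilators_quotient_by_left_annihilator
    {R S : Type*} [Ring R] [Ring S]
    (haccr : ACCRightAnnihilators R) (haccl : ACCLeftAnnihilators R)
    (I : TwoSidedIdeal R) (f : R →+* S) (hf : Function.Surjective f)
    (hker : ∀ r : R, f r = 0 ↔ r ∈ lAnnSet R (I : Set R)) :
    ACCRightAnnihilators S ∧ ACCLeftAnnihilators S := by
  constructor
  · -- right annihilators
    intro g hg hmono
    set Y : ℕ → Set S := fun n => lAnnSet S (g n) with hYdef
    have hgY : ∀ n, g n = rAnnSet S (Y n) := by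
      intro n
      obtain ⟨X, hX⟩ := hg n
      ext r
      simp only [hYdef, hX]
      constructor
      · intro hr z hz
        exact hz r hr
      · intro hr x hx
        refine hr x ?_
        intro w hw
        exact hw x hx
    set A : ℕ → Set R := fun n => rAnnSet R (f ⁻¹' (Y n)) with hAdef
    have hAmono : Monotone A := by
      intro m n hmn r hr y hy
      refine hr y ?_
      intro s hs
      exact hy s (hmono hmn hs)
    obtain ⟨N, hN⟩ := haccr A (fun n => ⟨_, rfl⟩) hAmono
    have key : ∀ n, f ⁻¹' (g n) = {r | ∀ i ∈ (I : Set R), r * i ∈ A n} := by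
      intro n
      ext r
      constructor
      · intro hr i hi y hy
        have h1 : f y * f r = 0 := by
          have : f r ∈ rAnnSet S (Y n) := by rw [← hgY n]; exact hr
          exact this (f y) hy
        have h2 : y * r ∈ lAnnSet R (I : Set R) := (hker (y * r)).mp (by rw [map_mul]; exact h1)
        have h3 : y * r * i = 0 := h2 i hi
        rw [← mul_assoc]
        exact h3
      · intro hr
        show f r ∈ g n
        rw [hgY n]
        intro s hs
        obtain ⟨y, rfl⟩ := hf s
        have h2 : y * r ∈ lAnnSet R (I : Set R) := by
          intro i hi
          rw [mul_assoc]
          exact hr i hi y hs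
        have := (hker (y * r)).mpr h2
        rw [map_mul] at this
        exact this
    refine ⟨N, fun n hn => hf.preimage_injective ?_⟩
    rw [key n, key N, hN n hn]
  · -- left annihilators
    intro g hg hmono
    set F : ℕ → Set R := fun n => f ⁻¹' (g n) with hFdef
    have hFann : ∀ n, ∃ X, F n = lAnnSet R X := by
      intro n
      obtain ⟨X, hX⟩ := hg n
      refine ⟨{z | ∃ y ∈ f ⁻¹' X, ∃ i ∈ (I : Set R), z = y * i}, ?_⟩
      ext r
      constructor
      · intro hr z hz
        obtain ⟨y, hy, i, hi, rfl⟩ := hz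
        have h1 : f r * f y = 0 := by
          have : f r ∈ lAnnSet S X := by rw [← hX]; exact hr
          exact this (f y) hy
        have h2 : r * y ∈ lAnnSet R (I : Set R) := (hker (r * y)).mp (by rw [map_mul]; exact h1)
        have h3 : r * y * i = 0 := h2 i hi
        rw [← mul_assoc]
        exact h3
      · intro hr
        show f r ∈ g n
        rw [hX]
        intro s hs
        obtain ⟨y, rfl⟩ := hf s
        have h2 : r * y ∈ lAnnSet R (I : Set R) := by
          intro i hi
          rw [mul_assoc] at *
          exact hr (y * i) ⟨y, hs, i, hi, rfl⟩
        have := (hker (r * y)).mpr h2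
        rw [map_mul] at this
        exact this
    have hFmono : Monotone F := fun m n hmn => Set.preimage_mono (hmono hmn)
    obtain ⟨N, hN⟩ := haccl F hFann hFmono
    exact ⟨N, fun n hn => hf.preimage_injective (hN n hn)⟩
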